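/- Let β ∈ (0, 1/3), set c = cos(2πβ) (so c > −1/2), and let n ∈ ℕ. Then the limit, as ω → ωₙ* with ω ∈ Ĩⁿ(β) and ω ≠ ωₙ*, of (r_β(ω) + 1/√(2 + 2c)) / cos²(ωL) equals −9/((1 + 2c)·√(2 + 2c)). (First-order Taylor expansion of the contraction factor r_β at the Dirac frequency ωₙ*.) -/

import Mathlib

open Real Filter Topology

/-- The edge length `L = 1/√3`. -/
noncomputable def L : ℝ := 1 / Real.sqrt 3

/-- The Dirac frequency `ωₙ* = (2n+1)π/(2L)`. -/
noncomputable def ωstar (n : ℕ) : ℝ := (2 * n + 1) * π / (2 * L)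

/-- `g_β(ω) = (9·cos²(ωL) − 3 − 2·cos(2πβ)) / √(2 + 2·cos(2πβ))`. -/
noncomputable def g (β ω : ℝ) : ℝ :=
  (9 * Real.cos (ω * L) ^ 2 - 3 - 2 * Real.cos (2 * π * β)) /
    Real.sqrt (2 + 2 * Real.cos (2 * π * β))

/-- `a(β) = arccos(√(3 + 2·cos(2πβ) − 2·√(2 + 2·cos(2πβ)))/3)`. -/
noncomputable def aβ (β : ℝ) : ℝ :=
  Real.arccos (Real.sqrt (3 + 2 * Real.cos (2 * π * β) -
    2 * Real.sqrt (2 + 2 * Real.cos (2 * π * β))) / 3)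

/-- The open interval `Ĩⁿ(β) = (nπ/L + a(β)/L, (n+1)π/L − a(β)/L)`. -/
noncomputable def Itilde (β : ℝ) (n : ℕ) : Set ℝ :=
  Set.Ioo (n * π / L + aβ β / L) ((n + 1) * π / L - aβ β / L)

/-- `r_β(ω) = (g_β(ω) + √(g_β(ω)² − 4))/2`. -/
noncomputable def r (β ω : ℝ) : ℝ := (g β ω + Real.sqrt (g β ω ^ 2 - 4)) / 2

/-!
Write `t = cos²(ωL)` and `c = cos(2πβ)`. Then `r_β(ω) = R(G_c(t))`, where `G_c` is affine in `t`
and `R x = (x + √(x² − 4))/2` is a root of `z² − x z + 1`. The Dirac frequency is `t = 0`,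
where `G_c(0)² − 4 = ((1 + 2c)/√(2 + 2c))²` is positive because `c > −1/2`; so `R ∘ G_c` is
differentiable at `0`, with `R(G_c(0)) = −1/√(2 + 2c)`. The quotient in question is the difference
quotient of `R ∘ G_c` at `0` along `t = cos²(ωL)`, which tends to `0` and does not vanish on the
punctured interval, so the limit is the derivative `−9/((1 + 2c)√(2 + 2c))`.
-/

open Set

theorem neg_half_lt_cos_two_pi_mul {β : ℝ} (hβ : |β| < 1 / 3) : -(1 / 2) < cos (2 * π * β) := by
  have hcos : cos (2 * π / 3) = -(1 / 2) := by
    rw [show 2 * π / 3 = π - π / 3 by ring, cos_pi_sub, cos_pi_div_three]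
  rw [← hcos, ← cos_abs (2 * π * β), abs_mul, abs_of_pos (by positivity : 0 < 2 * π)]
  exact cos_lt_cos_of_nonneg_of_le_pi (by positivity) (by linarith [pi_pos])
    (by nlinarith [pi_pos])

theorem cos_ne_zero_of_mem_Ioo {x : ℝ} {n : ℤ} (hx : x ∈ Ioo (n * π) ((n + 1) * π))
    (hmid : x ≠ (2 * n + 1) * π / 2) : cos x ≠ 0 := by
  rw [Ne, cos_eq_zero_iff]
  rintro ⟨k, rfl⟩
  have h₁ : (2 * n : ℝ) < 2 * k + 1 := by nlinarith [hx.1, pi_pos]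
  have h₂ : (2 * k + 1 : ℝ) < 2 * n + 2 := by nlinarith [hx.2, pi_pos]
  have hkn : k = n := by
    have h₁' : 2 * n < 2 * k + 1 := by exact_mod_cast h₁
    have h₂' : 2 * k + 1 < 2 * n + 2 := by exact_mod_cast h₂
    omega
  exact hmid (by rw [hkn])

noncomputable def quadRoot (x : ℝ) : ℝ := (x + √(x ^ 2 - 4)) / 2

theorem hasDerivAt_quadRoot {x : ℝ} (hx : 4 < x ^ 2) :
    HasDerivAt quadRoot ((1 + x / √(x ^ 2 - 4)) / 2) x := by
  have hsqrt : HasDerivAt (fun y : ℝ => √(y ^ 2 - 4)) (x / √(x ^ 2 - 4)) x := by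
    convert ((hasDerivAt_pow 2 x).sub_const 4).sqrt (by linarith) using 1
    field_simp
    ring
  exact ((hasDerivAt_id x).add hsqrt).div_const 2

noncomputable def gLin (c t : ℝ) : ℝ := (9 * t - 3 - 2 * c) / √(2 + 2 * c)

theorem r_eq_quadRoot_gLin (β ω : ℝ) :
    r β ω = quadRoot (gLin (cos (2 * π * β)) (cos (ω * L) ^ 2)) := rfl

theorem hasDerivAt_gLin (c t : ℝ) : HasDerivAt (gLin c) (9 / √(2 + 2 * c)) t := by
  refine ((((hasDerivAt_id t).const_mul 9).sub_const 3).sub_const (2 * c)).div_const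
    (√(2 + 2 * c)) |>.congr_deriv ?_
  ring

theorem sqrt_gLin_zero_sq_sub_four {c : ℝ} (hc : -(1 / 2) < c) :
    √(gLin c 0 ^ 2 - 4) = (1 + 2 * c) / √(2 + 2 * c) := by
  have hs : √(2 + 2 * c) ^ 2 = 2 + 2 * c := sq_sqrt (by linarith)
  have hs0 : 0 < √(2 + 2 * c) := sqrt_pos.2 (by linarith)
  rw [← sqrt_sq (div_nonneg (by linarith) hs0.le : 0 ≤ (1 + 2 * c) / √(2 + 2 * c))]
  congr 1
  rw [gLin, div_pow, div_pow, hs, div_sub' (by linarith)]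
  congr 1
  ring

theorem quadRoot_gLin_zero {c : ℝ} (hc : -(1 / 2) < c) :
    quadRoot (gLin c 0) = -(1 / √(2 + 2 * c)) := by
  rw [quadRoot, sqrt_gLin_zero_sq_sub_four hc, gLin]
  ring

theorem hasDerivAt_quadRoot_gLin_zero {c : ℝ} (hc : -(1 / 2) < c) :
    HasDerivAt (fun t => quadRoot (gLin c t)) (-9 / ((1 + 2 * c) * √(2 + 2 * c))) 0 := by
  have h1c : 0 < 1 + 2 * c := by linarith
  have hs0 : 0 < √(2 + 2 * c) := sqrt_pos.2 (by linarith)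
  have hroot := sqrt_gLin_zero_sq_sub_four hc
  have hx : 4 < gLin c 0 ^ 2 := by
    have : 0 < √(gLin c 0 ^ 2 - 4) := by rw [hroot]; positivity
    rwa [sqrt_pos, sub_pos] at this
  refine ((hasDerivAt_quadRoot hx).comp 0 (hasDerivAt_gLin c 0)).congr_deriv ?_
  rw [hroot, gLin]
  generalize √(2 + 2 * c) = s at hs0 ⊢
  field_simp
  ring

theorem ωstar_mul_L (n : ℕ) : ωstar n * L = (2 * n + 1) * π / 2 := by
  have hL : L ≠ 0 := by unfold L; positivity
  unfold ωstar
  field_simp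

theorem mul_L_mem_Ioo_of_mem_Itilde {β ω : ℝ} {n : ℕ} (hω : ω ∈ Itilde β n) :
    ω * L ∈ Ioo (n * π) ((n + 1) * π) := by
  have hL : 0 < L := by unfold L; positivity
  have ha : 0 ≤ aβ β / L := div_nonneg (arccos_nonneg _) hL.le
  obtain ⟨h₁, h₂⟩ := hω
  constructor
  · rw [← div_lt_iff₀ hL]; linarith
  · rw [← lt_div_iff₀ hL]; linarith

theorem tendsto_cos_sq_nhdsNE_zero (β : ℝ) (n : ℕ) :
    Tendsto (fun ω => cos (ω * L) ^ 2) (𝓝[Itilde β n \ {ωstar n}] (ωstar n)) (𝓝[≠] 0) := by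
  refine tendsto_nhdsWithin_iff.2 ⟨?_, eventually_mem_nhdsWithin.mono ?_⟩
  · have hcont : Continuous fun ω => cos (ω * L) ^ 2 := by fun_prop
    have hzero : cos (ωstar n * L) ^ 2 = 0 := by
      rw [ωstar_mul_L, cos_eq_zero_iff.2 ⟨n, by push_cast; ring⟩, sq, zero_mul]
    exact hzero ▸ (hcont.tendsto (ωstar n)).mono_left nhdsWithin_le_nhds
  · rintro ω ⟨hω, hne⟩
    have hL : L ≠ 0 := by unfold L; positivity
    have hIoo : ω * L ∈ Ioo ((n : ℤ) * π) (((n : ℤ) + 1) * π) := by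
      exact_mod_cast mul_L_mem_Ioo_of_mem_Itilde hω
    refine pow_ne_zero 2 (cos_ne_zero_of_mem_Ioo hIoo fun hmid => hne ?_)
    rw [mem_singleton_iff, ← mul_left_inj' hL, ωstar_mul_L, hmid]
    push_cast
    ring

theorem stmt_14 (β : ℝ) (hβ0 : 0 < β) (hβ1 : β < 1 / 3) (n : ℕ) :
    Tendsto
      (fun ω : ℝ =>
        (r β ω + 1 / Real.sqrt (2 + 2 * Real.cos (2 * π * β))) / Real.cos (ω * L) ^ 2)
      (𝓝[Itilde β n \ {ωstar n}] (ωstar n))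
      (𝓝 (-9 / ((1 + 2 * Real.cos (2 * π * β)) *
        Real.sqrt (2 + 2 * Real.cos (2 * π * β))))) := by
  have hc := neg_half_lt_cos_two_pi_mul (abs_lt.2 ⟨by linarith, hβ1⟩)
  have hslope := (hasDerivAt_iff_tendsto_slope.1 (hasDerivAt_quadRoot_gLin_zero hc)).comp
    (tendsto_cos_sq_nhdsNE_zero β n)
  refine hslope.congr fun ω => ?_
  rw [Function.comp_apply, slope_def_field, quadRoot_gLin_zero hc, sub_neg_eq_add, sub_zero,
    r_eq_quadRoot_gLin]
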